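/- arXiv:1404.2118 — 2 statements merged into one kernel-verified Lean document; each statement's English description precedes it below -/
import Mathlib

section
/- For every integer d ≥ 2 there is a constant C₇ = C₇(d) ≥ 1 such that for all integers k ≥ 2, with j = ⌊log_{2^d}(k)⌋ and m = k − 2^{dj}, the multinomial coefficient (k−1)! / ( (Π_{i=0}^{j−1} ((2^d − 1)·2^{di})!) · m! ) is at most C₇^{k−1}. -/
/-!
The cut `k - 1 = m + (b ^ j - 1)` with `b = 2 ^ d` costs a binomial coefficient `≤ 2 ^ (k - 1)`,
and `b ^ (j + 1) - 1 = (b - 1) b ^ j + (b ^ j - 1)` peels off the blocks one at a time, each cut costing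
at most `2 ^ (b ^ (j + 1))`. These exponents grow geometrically, so their total is `O(b ^ j) = O(k)`.
-/

open Finset Nat

theorem Nat.factorial_add_le (a c : ℕ) : (a + c)! ≤ 2 ^ (a + c) * a ! * c ! := by
  rw [← add_choose_mul_factorial_mul_factorial]
  gcongr
  exact choose_le_two_pow _ _

theorem Nat.pow_succ_sub_one_eq {b : ℕ} (hb : 1 ≤ b) (j : ℕ) :
    b ^ (j + 1) - 1 = (b - 1) * b ^ j + (b ^ j - 1) := by
  have hp : 1 ≤ b ^ j := one_le_pow _ _ hb
  have hbp : b ^ j ≤ b * b ^ j := le_mul_of_one_le_left' hb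
  rw [pow_succ', Nat.sub_one_mul]
  omega

theorem Nat.factorial_pow_sub_one_le {b : ℕ} (hb : 1 ≤ b) (j : ℕ) :
    (b ^ j - 1)! ≤ 4 ^ b ^ j * ∏ i ∈ range j, ((b - 1) * b ^ i)! := by
  induction j with
  | zero => simp
  | succ j ih =>
    have hcost : 2 ^ (b ^ (j + 1) - 1) * 4 ^ b ^ j ≤ 4 ^ b ^ (j + 1) := by
      have h2b : 2 * b ^ j ≤ b ^ (j + 1) + 1 := by
        rw [pow_succ']
        rcases hb.eq_or_lt with rfl | hb2
        · simp
        · nlinarith [one_le_pow j b hb]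
      rw [show (4 : ℕ) = 2 ^ 2 by rfl, ← pow_mul, ← pow_mul, ← pow_add]
      exact Nat.pow_le_pow_right two_pos (by omega)
    calc (b ^ (j + 1) - 1)!
        ≤ 2 ^ (b ^ (j + 1) - 1) * ((b - 1) * b ^ j)! * (b ^ j - 1)! := by
          rw [pow_succ_sub_one_eq hb]
          exact factorial_add_le _ _
      _ ≤ 2 ^ (b ^ (j + 1) - 1) * ((b - 1) * b ^ j)! *
            (4 ^ b ^ j * ∏ i ∈ range j, ((b - 1) * b ^ i)!) := by gcongr
      _ = 2 ^ (b ^ (j + 1) - 1) * 4 ^ b ^ j * ∏ i ∈ range (j + 1), ((b - 1) * b ^ i)! := by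
          rw [prod_range_succ]; ring
      _ ≤ 4 ^ b ^ (j + 1) * ∏ i ∈ range (j + 1), ((b - 1) * b ^ i)! := by gcongr

theorem Nat.factorial_pred_le_mul_prod_factorial {b k : ℕ} (hb : 1 ≤ b) (hk : 2 ≤ k) :
    (k - 1)! ≤ 32 ^ (k - 1) *
      ((∏ i ∈ range (log b k), ((b - 1) * b ^ i)!) * (k - b ^ log b k)!) := by
  set j := log b k
  have hbj : b ^ j ≤ k := pow_log_le_self b (by omega)
  have hsplit : k - 1 = (k - b ^ j) + (b ^ j - 1) := by
    have := one_le_pow j b hb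
    omega
  have hcost : 2 ^ (k - 1) * 4 ^ b ^ j ≤ 32 ^ (k - 1) := by
    calc 2 ^ (k - 1) * 4 ^ b ^ j ≤ 2 ^ (k - 1) * 16 ^ (k - 1) := by
          rw [show (16 : ℕ) = 4 ^ 2 by rfl, ← pow_mul]
          gcongr
          · norm_num
          · omega
      _ = 32 ^ (k - 1) := by rw [← mul_pow]; norm_num
  calc (k - 1)! ≤ 2 ^ (k - 1) * (k - b ^ j)! * (b ^ j - 1)! := by
        simpa only [← hsplit] using factorial_add_le (k - b ^ j) (b ^ j - 1)
    _ ≤ 2 ^ (k - 1) * (k - b ^ j)! * (4 ^ b ^ j * ∏ i ∈ range j, ((b - 1) * b ^ i)!) := by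
        gcongr
        exact factorial_pow_sub_one_le hb j
    _ = 2 ^ (k - 1) * 4 ^ b ^ j * ((∏ i ∈ range j, ((b - 1) * b ^ i)!) * (k - b ^ j)!) := by
        ring
    _ ≤ 32 ^ (k - 1) * ((∏ i ∈ range j, ((b - 1) * b ^ i)!) * (k - b ^ j)!) := by gcongr

theorem multinomial_bound_general (d : ℕ) :
    ∃ C₇ : ℝ, 1 ≤ C₇ ∧
      ∀ k : ℕ, 2 ≤ k →
        ((k - 1).factorial : ℝ)
            / (((∏ i ∈ Finset.range (Nat.log (2 ^ d) k),
                  ((2 ^ d - 1) * 2 ^ (d * i)).factorial : ℕ) : ℝ)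
                * ((k - 2 ^ (d * Nat.log (2 ^ d) k)).factorial : ℝ))
          ≤ C₇ ^ (k - 1) := by
  refine ⟨32, by norm_num, fun k hk => ?_⟩
  simp only [pow_mul]
  have hbound := factorial_pred_le_mul_prod_factorial (b := 2 ^ d) Nat.one_le_two_pow hk
  rw [div_le_iff₀ (by positivity)]
  exact_mod_cast hbound

/-- inequality (3.3). For every `d ≥ 2` there is `C₇ = C₇(d) ≥ 1`
such that for all `k ≥ 2`, with `j = ⌊log_{2^d} k⌋` and `m = k - 2^{dj}`, the
multinomial coefficient `(k-1)! / ((Π_{i=0}^{j-1} ((2^d-1)·2^{di})!) · m!)`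
is at most `C₇^{k-1}`. -/
theorem multinomial_bound (d : ℕ) (hd : 2 ≤ d) :
    ∃ C₇ : ℝ, 1 ≤ C₇ ∧
      ∀ k : ℕ, 2 ≤ k →
        ((k - 1).factorial : ℝ)
            / (((∏ i ∈ Finset.range (Nat.log (2 ^ d) k),
                  ((2 ^ d - 1) * 2 ^ (d * i)).factorial : ℕ) : ℝ)
                * ((k - 2 ^ (d * Nat.log (2 ^ d) k)).factorial : ℝ))
          ≤ C₇ ^ (k - 1) :=
  multinomial_bound_general d
end

section
/- For every integer d ≥ 2 there is a constant C₇ = C₇(d) ≥ 1 such that for all integers k ≥ 2, with j = ⌊log_{2^d}(k)⌋ and m = k − 2^{dj}, one has 2^{−m(j−1)d} · Π_{i=1}^{j−1} 2^{−d·i·(2^d−1)·2^{id}} ≤ C₇^k · k^{−k}. -/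
/-!
Put `q = 2^d`, so that `q^j ≤ k < q^(j+1)` and `k = q^j + m`. Taking base-2 logarithms and using
`k^k ≤ q^((j+1)k)`, the claim with `C₇ = 2^(3d)` reduces to the exponent inequality
`(j+1)k ≤ 3k + m(j-1) + (q-1) ∑_{i<j} i q^i`. Its only nonlinear input is
`(q-1) ∑_{i<j} i q^i ≥ (j-2) q^j`, an Abel-summation estimate that holds as soon as `q ≥ 2`.
-/

open Finset

section OrderedRing

variable {R : Type*} [CommRing R] [LinearOrder R] [IsStrictOrderedRing R]

theorem sub_two_mul_pow_le_sub_one_mul_sum_range_mul_pow {q : R} (hq : 2 ≤ q) (j : ℕ) :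
    ((j : R) - 2) * q ^ j ≤ (q - 1) * ∑ i ∈ range j, (i : R) * q ^ i := by
  induction j with
  | zero => simp
  | succ j ih =>
    rw [sum_range_succ, pow_succ]
    push_cast
    have hqj : 0 ≤ q ^ j := pow_nonneg (by linarith) j
    nlinarith [mul_nonneg hqj (sub_nonneg.2 hq)]

theorem succ_mul_le_three_mul_add_sum_range {q m : R} (hq : 2 ≤ q) (hm : 0 ≤ m) (j : ℕ) :
    ((j : R) + 1) * (q ^ j + m) ≤
      3 * (q ^ j + m) + m * ((j : R) - 1) + (q - 1) * ∑ i ∈ range j, (i : R) * q ^ i := by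
  linear_combination sub_two_mul_pow_le_sub_one_mul_sum_range_mul_pow hq j + hm

end OrderedRing

theorem sum_Icc_one_sub_one_eq_sum_range {M : Type*} [AddCommMonoid M] {f : ℕ → M}
    (hf : f 0 = 0) (j : ℕ) : ∑ i ∈ Icc 1 (j - 1), f i = ∑ i ∈ range j, f i := by
  refine sum_subset (fun i hi => by simp at hi ⊢; omega) fun i hi hi' => ?_
  obtain rfl : i = 0 := by simp at hi hi'; omega
  exact hf

theorem prod_zpow_neg_natCast {ι G : Type*} [DivisionCommMonoid G] (s : Finset ι) (a : G)
    (f : ι → ℕ) : ∏ i ∈ s, a ^ (-(f i : ℤ)) = a ^ (-((∑ i ∈ s, f i : ℕ) : ℤ)) := by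
  simp only [zpow_neg, zpow_natCast, prod_inv_distrib, prod_pow_eq_pow_sum]

theorem zpow_le_pow_div_pow_of_le {K : Type*} [Field K] [LinearOrder K] [IsStrictOrderedRing K]
    {a x : K} (ha : 1 ≤ a) (hx : 0 < x) {b c n : ℕ} {e : ℤ} (hxb : x ≤ a ^ b)
    (he : e + b * n ≤ c * n) : a ^ e ≤ (a ^ c) ^ n / x ^ n := by
  have ha0 : a ≠ 0 := (zero_lt_one.trans_le ha).ne'
  rw [le_div_iff₀ (pow_pos hx n)]
  calc a ^ e * x ^ n ≤ a ^ e * (a ^ b) ^ n := by gcongr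
    _ = a ^ (e + (b * n : ℕ)) := by rw [zpow_add₀ ha0, zpow_natCast, pow_mul]
    _ ≤ a ^ ((c * n : ℕ) : ℤ) := zpow_le_zpow_right₀ ha (by push_cast; exact he)
    _ = (a ^ c) ^ n := by rw [zpow_natCast, pow_mul]

/-- inequality (3.4). For every `d ≥ 2` there is `C₇ = C₇(d) ≥ 1`
such that for all `k ≥ 2`, with `j = ⌊log_{2^d} k⌋` and `m = k - 2^{dj}`, one has
`2^{-m(j-1)d} · Π_{i=1}^{j-1} 2^{-d·i·(2^d-1)·2^{id}} ≤ C₇^k · k^{-k}`. -/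
theorem dyadic_product_bound (d : ℕ) (hd : 2 ≤ d) :
    ∃ C₇ : ℝ, 1 ≤ C₇ ∧
      ∀ k : ℕ, 2 ≤ k →
        (2 : ℝ) ^ (-(((k - 2 ^ (d * Nat.log (2 ^ d) k) : ℕ) : ℤ)
              * ((Nat.log (2 ^ d) k : ℤ) - 1) * (d : ℤ)))
            * ∏ i ∈ Finset.Icc 1 (Nat.log (2 ^ d) k - 1),
                (2 : ℝ) ^ (-((d * i * (2 ^ d - 1) * 2 ^ (i * d) : ℕ) : ℤ))
          ≤ C₇ ^ k / (k : ℝ) ^ k := by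
  have hd0 : d ≠ 0 := by omega
  refine ⟨2 ^ (3 * d), one_le_pow₀ one_le_two, fun k hk => ?_⟩
  have hle : (2 ^ d) ^ Nat.log (2 ^ d) k ≤ k := Nat.pow_log_le_self _ (by omega)
  have hlt := Nat.lt_pow_succ_log_self (Nat.one_lt_two_pow hd0) k
  generalize Nat.log (2 ^ d) k = j at hle hlt ⊢
  rw [← pow_mul] at hle hlt
  have hsum : ((∑ i ∈ Icc 1 (j - 1), d * i * (2 ^ d - 1) * 2 ^ (i * d) : ℕ) : ℤ) =
      d * ((2 ^ d - 1) * ∑ i ∈ range j, (i : ℤ) * (2 ^ d) ^ i) := by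
    push_cast [Nat.one_le_two_pow]
    rw [sum_Icc_one_sub_one_eq_sum_range (by simp), mul_sum, mul_sum]
    exact sum_congr rfl fun i _ => by ring
  rw [prod_zpow_neg_natCast, ← zpow_add₀ two_ne_zero]
  refine zpow_le_pow_div_pow_of_le one_le_two (by positivity) (b := d * (j + 1))
    (by exact_mod_cast hlt.le) ?_
  have hm : (0 : ℤ) ≤ k - 2 ^ (d * j) := by rw [sub_nonneg]; exact_mod_cast hle
  rw [Nat.cast_sub hle, hsum]
  push_cast
  linear_combination (d : ℤ) * succ_mul_le_three_mul_add_sum_range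
    (le_self_pow₀ one_le_two hd0 : (2 : ℤ) ≤ 2 ^ d) hm j
end
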